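/- arXiv:gr-qc/0403040 — 2 statements merged into one kernel-verified Lean document; each statement's English description precedes it below -/
import Mathlib

section
/- Let Σ₋, Σ₁₂, Σ₁₃, N, N̄ be real numbers satisfying Σ₋² + Σ₁₂² + Σ₁₃² + N² ≤ 1 and N̄² ≤ N². Then 4Σ₋²N² + (Σ₁₂N + Σ₁₃N̄)² + (Σ₁₃N + Σ₁₂N̄)² ≤ 1. -/
theorem tilt_bound_redundant (σm σ12 σ13 N Nbar : ℝ)
    (h1 : σm^2 + σ12^2 + σ13^2 + N^2 ≤ 1) (h2 : Nbar^2 ≤ N^2) :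
    4 * σm^2 * N^2 + (σ12 * N + σ13 * Nbar)^2 + (σ13 * N + σ12 * Nbar)^2 ≤ 1 := by
  nlinarith [sq_nonneg (σm^2 + σ12^2 + σ13^2 + N^2 - 1), sq_nonneg (σ12*N - σ13*Nbar), sq_nonneg (σ13*N - σ12*Nbar), sq_nonneg (σm^2 - N^2), sq_nonneg (σ12 + σ13), sq_nonneg (σ12 - σ13), sq_nonneg (N + Nbar), sq_nonneg (N - Nbar), sq_nonneg (σm^2 + σ12^2 + σ13^2 - N^2), mul_nonneg (sub_nonneg.2 h2) (sq_nonneg (σ12+σ13)), mul_nonneg (sub_nonneg.2 h2) (sq_nonneg (σ12-σ13))]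
end

section
/- Let A be a real symmetric 3×3 matrix with trace zero whose entries' squares sum to 6Σ², and let c be a unit vector in ℝ³. Then |cᵀ A c| ≤ 2Σ. -/
set_option maxHeartbeats 1000000 in

theorem quadratic_form_bound_tracefree_symm (A : Matrix (Fin 3) (Fin 3) ℝ)
    (hsymm : A.IsSymm) (σ : ℝ) (hσ : 0 ≤ σ) (htr : A.trace = 0)
    (hsq : ∑ i, ∑ j, (A i j)^2 = 6 * σ^2)
    (c : Fin 3 → ℝ) (hc : ∑ i, (c i)^2 = 1) :
    |∑ i, ∑ j, c i * A i j * c j| ≤ 2 * σ := by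
  have htr' : A 0 0 + A 1 1 + A 2 2 = 0 := by
    simpa [Matrix.trace, Matrix.diag, Fin.sum_univ_three] using htr
  simp only [Fin.sum_univ_three] at hsq hc ⊢
  set B : Fin 3 × Fin 3 → ℝ :=
    fun p => c p.1 * c p.2 - if p.1 = p.2 then (1:ℝ)/3 else 0 with hB
  have cs := Finset.sum_mul_sq_le_sq_mul_sq Finset.univ
    (fun p : Fin 3 × Fin 3 => A p.1 p.2) B
  have e1 : ∑ p : Fin 3 × Fin 3, A p.1 p.2 * B p
      = c 0 * A 0 0 * c 0 + c 0 * A 0 1 * c 1 + c 0 * A 0 2 * c 2 +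
        (c 1 * A 1 0 * c 0 + c 1 * A 1 1 * c 1 + c 1 * A 1 2 * c 2) +
        (c 2 * A 2 0 * c 0 + c 2 * A 2 1 * c 1 + c 2 * A 2 2 * c 2) := by
    simp only [hB, Fintype.sum_prod_type, Fin.sum_univ_three]
    norm_num [Fin.ext_iff]
    linear_combination (-(1:ℝ)/3) * htr'
  have e2 : ∑ p : Fin 3 × Fin 3, (A p.1 p.2)^2 = 6 * σ^2 := by
    simp only [Fintype.sum_prod_type, Fin.sum_univ_three]
    linarith [hsq]
  have e3 : ∑ p : Fin 3 × Fin 3, (B p)^2 = 2/3 := by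
    simp only [hB, Fintype.sum_prod_type, Fin.sum_univ_three]
    norm_num [Fin.ext_iff]
    linear_combination ((c 0)^2 + (c 1)^2 + (c 2)^2 + 1/3) * hc
  rw [e1, e2, e3] at cs
  rw [abs_le]
  constructor <;> nlinarith [cs, hσ]
end
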